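/- Let X ≤ 0 a.s. be integrable with U_a = E[X]. Define p(c) = E[exp(c)/(exp(c)+exp(U_a+X))] and q(c) = exp(U_a)/(exp(U_a)+exp(2c)). Then p(U_a) ≤ q(U_a), so any c with p(c)=q(c) satisfies c ≥ U_a. -/

import Mathlib

/-!
Every term in sight is a value of the logistic function `σ(t) = 1 / (1 + e^{-t})`:
`e^a / (e^a + e^b) = σ(a - b)`. Hence `p c = E[σ(c - U_a - X)]` is monotone in `c` and
`q c = σ(U_a - 2c)` is strictly antitone. Since `σ` is concave on `[0, ∞)` and `-X ≥ 0`,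
Jensen gives `p U_a = E[σ(-X)] ≤ σ(-E[X]) = q U_a`, so `p c = q c` forces `c ≥ U_a`.
-/

open MeasureTheory Real Set

namespace Real

theorem exp_div_exp_add_exp (a b : ℝ) : exp a / (exp a + exp b) = sigmoid (a - b) := by
  rw [sigmoid_def, neg_sub, exp_sub]
  field_simp

theorem concaveOn_sigmoid_Ici : ConcaveOn ℝ (Ici 0) sigmoid := by
  refine AntitoneOn.concaveOn_of_deriv (convex_Ici 0) continuous_sigmoid.continuousOn
    differentiable_sigmoid.differentiableOn ?_
  rw [interior_Ici, deriv_sigmoid]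
  intro x hx y _ hxy
  have half_le : 2⁻¹ ≤ sigmoid x := sigmoid_zero ▸ sigmoid_le (le_of_lt hx)
  have hle : sigmoid x ≤ sigmoid y := sigmoid_le hxy
  -- `t ↦ t (1 - t)` is antitone for `t ≥ 1/2`
  nlinarith

end Real

section Logistic

variable {Ω : Type*} [MeasurableSpace Ω] {μ : Measure Ω}

theorem integrable_sigmoid_comp [IsFiniteMeasure μ] {f : Ω → ℝ}
    (hf : AEStronglyMeasurable f μ) : Integrable (fun ω => sigmoid (f ω)) μ :=
  .of_bound (continuous_sigmoid.comp_aestronglyMeasurable hf) 1 <| .of_forall fun ω => by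
    rw [norm_of_nonneg (sigmoid_nonneg _)]
    exact sigmoid_le_one _

theorem integral_sigmoid_le_sigmoid_integral [IsProbabilityMeasure μ] {Y : Ω → ℝ}
    (hY : Integrable Y μ) (hY_nonneg : ∀ᵐ ω ∂μ, 0 ≤ Y ω) :
    ∫ ω, sigmoid (Y ω) ∂μ ≤ sigmoid (∫ ω, Y ω ∂μ) :=
  concaveOn_sigmoid_Ici.le_map_integral continuous_sigmoid.continuousOn isClosed_Ici
    hY_nonneg hY (integrable_sigmoid_comp hY.aestronglyMeasurable)

theorem monotone_integral_sigmoid_sub [IsFiniteMeasure μ] {f : Ω → ℝ}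
    (hf : AEStronglyMeasurable f μ) : Monotone fun c => ∫ ω, sigmoid (c - f ω) ∂μ :=
  fun _ _ hcd => integral_mono (integrable_sigmoid_comp (aestronglyMeasurable_const.sub hf))
    (integrable_sigmoid_comp (aestronglyMeasurable_const.sub hf))
    fun ω => sigmoid_le (by linarith)

end Logistic

theorem rps_certainty_equiv_losses {Ω : Type*} [MeasurableSpace Ω] (μ : Measure Ω)
    [IsProbabilityMeasure μ] (X : Ω → ℝ) (hX : Integrable X μ)
    (hneg : ∀ᵐ ω ∂μ, X ω ≤ 0) (Ua : ℝ) (hUa : Ua = ∫ ω, X ω ∂μ)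
    (p q : ℝ → ℝ)
    (hp : ∀ c, p c = ∫ ω, Real.exp c / (Real.exp c + Real.exp (Ua + X ω)) ∂μ)
    (hq : ∀ c, q c = Real.exp Ua / (Real.exp Ua + Real.exp (2 * c))) :
    p Ua ≤ q Ua ∧ ∀ c, p c = q c → Ua ≤ c := by
  have hp_sigmoid : ∀ c, p c = ∫ ω, sigmoid (c - (Ua + X ω)) ∂μ := fun c => by
    simp only [hp, exp_div_exp_add_exp]
  have hq_sigmoid : ∀ c, q c = sigmoid (Ua - 2 * c) := fun c => by
    rw [hq, exp_div_exp_add_exp]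
  have hp_mono : Monotone p := by
    simpa only [← hp_sigmoid] using
      monotone_integral_sigmoid_sub (f := fun ω => Ua + X ω) (hX.aestronglyMeasurable.const_add Ua)
  have hq_anti : StrictAnti q := fun c d hcd => by
    simp only [hq_sigmoid]
    exact sigmoid_lt (by linarith)
  have jensen : p Ua ≤ q Ua := by
    have h := integral_sigmoid_le_sigmoid_integral (Y := fun ω => -X ω) hX.neg
      (hneg.mono fun ω hω => neg_nonneg.2 hω)
    rw [integral_neg, ← hUa] at h
    simpa only [hp_sigmoid, hq_sigmoid, sub_add_cancel_left, show Ua - 2 * Ua = -Ua by ring]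
      using h
  refine ⟨jensen, fun c hpq => not_lt.1 fun hc => ?_⟩
  have := hq_anti hc
  linarith [hp_mono hc.le]
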